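/- arXiv:1206.3429 — 2 statements merged into one kernel-verified Lean document; each statement's English description precedes it below -/
import Mathlib

section
/- Let 0 < p < 1, q = 1 − p, and let b be a boundary with coordinates b(τ) = (x(τ), t(τ)) and exit weights π. Define φ^{(1)}(τ₁, τ₂) = π(τ₂)·[τ₂ ≥ τ₁] and, recursively for m ≥ 1, φ^{(m+1)}(τ₁, τ₂) = ∑_{z = τ₁}^{τ₂} φ^{(1)}(τ₁, z) · φ^{(m)}(z, τ₂) (a finite sum, zero when τ₂ < τ₁). Then for every m ≥ 1, all τ₁, τ₂ ∈ ℤ and every radius r with 1/2 < r < 1/2 + p/q: φ^{(m)}(τ₁, τ₂) = (2πi)^{−1} ∮_{|w−1/2|=r} (q + p/w)^{t(τ₁)−t(τ₂)} w^{x(τ₁)−x(τ₂)+m} / ( w² (w−1)^m (1/w + 1/π(τ₂) − 1) ) dw. -/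
/-!
Let `ℓ(w) = q w + p`; its only zero `-p/q` lies outside the closed disc `|w - 1/2| ≤ r`. Since
`x(τ₁) - x(τ₂) = t(τ₁) - t(τ₂) + τ₂ - τ₁`, on the circle the integrand equals `π(τ₂) K_{m+1}(τ₁)`,
where `K_n(τ) = ℓ(w)^σ w^(τ₂ - τ - 1) (w / (w - 1))^n` with `σ = t(τ) - t(τ₂ + 1)` (`phiKernel`).
A horizontal step multiplies `K_n(τ)` by `1 / w` and a vertical one by `ℓ(w) / w`, and
`w - ℓ(w) = p (w - 1)`; hence `K_{n+1}(τ) = π(τ) K_n(τ) + K_{n+1}(τ + 1)`, which is also the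
recursion of the convolutions `φ^{(n+1)}(·, τ₂)` (split off the term `z = τ`). A solution of this
recursion is determined by its values at `n = 0` and at `τ = τ₂ + 1`.

For `n = 0` only the residue at `0` matters: there is none for `τ < τ₂`; for `τ = τ₂` it is
`p^σ = 1 / π(τ₂)`; for `τ > τ₂` we have `0 ≤ σ ≤ τ - τ₂ - 1`, so `K_0(τ)` is the polynomial `ℓ^σ`
of degree `σ` times `w^k` with `k ≤ -σ - 2`, and has no `w⁻¹` term. For `n ≥ 1`, `K_n(τ₂ + 1) = w^(n-2) / (w - 1)^n` is
`O(w^(-2))` at infinity, so its residues at `0` and `1` cancel.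
-/

open Complex

/-- A staircase-like boundary in the space-time plane: at each `τ` the boundary makes
either a horizontal step `(-1, 0)` or a vertical step `(0, 1)`. -/
structure Boundary where
  b : ℤ → ℤ × ℤ
  step : ∀ τ : ℤ, b (τ + 1) = b τ + (-1, 0) ∨ b (τ + 1) = b τ + (0, 1)

/-- Exit weight: `p` for a vertical step, `1` for a horizontal step. -/
def exitWeight (p : ℝ) (B : Boundary) (τ : ℤ) : ℝ :=
  if B.b (τ + 1) = B.b τ + (0, 1) then p else 1

/-- The one-step transition function `φ^{(1)}(τ₁,τ₂) = π(τ₂)·[τ₂ ≥ τ₁]`. -/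
def phiOne (p : ℝ) (B : Boundary) (τ₁ τ₂ : ℤ) : ℝ :=
  if τ₁ ≤ τ₂ then exitWeight p B τ₂ else 0

/-- `phiM p B m = φ^{(m+1)}`: the `(m+1)`-fold convolution, defined recursively by
`φ^{(m+1)}(τ₁,τ₂) = ∑_{z=τ₁}^{τ₂} φ^{(1)}(τ₁,z)·φ^{(m)}(z,τ₂)`. -/
noncomputable def phiM (p : ℝ) (B : Boundary) : ℕ → ℤ → ℤ → ℝ
  | 0 => phiOne p B
  | m + 1 => fun τ₁ τ₂ => ∑ z ∈ Finset.Icc τ₁ τ₂, phiOne p B τ₁ z * phiM p B m z τ₂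

open Metric

namespace Boundary

variable (B : Boundary)

theorem monotone_snd : Monotone fun τ => (B.b τ).2 :=
  monotone_int_of_le_succ fun τ => by rcases B.step τ with h | h <;> simp [h]

theorem monotone_sub_snd : Monotone fun τ => τ - (B.b τ).2 :=
  monotone_int_of_le_succ fun τ => by rcases B.step τ with h | h <;> simp [h]

theorem fst_sub_fst (σ τ : ℤ) :
    (B.b σ).1 - (B.b τ).1 = (B.b σ).2 - (B.b τ).2 + (τ - σ) := by
  set g : ℤ → ℤ := fun τ => (B.b τ).1 - (B.b τ).2 + τ
  have hstep : ∀ τ, g (τ + 1) = g τ := fun τ => by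
    rcases B.step τ with h | h <;> simp [g, h] <;> ring
  have hmono : Monotone g := monotone_int_of_le_succ fun τ => (hstep τ).ge
  have hanti : Antitone g := antitone_int_of_succ_le fun τ => (hstep τ).le
  have : g σ = g τ := by
    rcases le_total σ τ with h | h
    · exact le_antisymm (hmono h) (hanti h)
    · exact le_antisymm (hanti h) (hmono h)
  simp only [g] at this
  linarith

end Boundary

theorem exitWeight_eq_zpow (p : ℝ) (B : Boundary) (τ : ℤ) :
    exitWeight p B τ = p ^ ((B.b (τ + 1)).2 - (B.b τ).2) := by
  unfold exitWeight
  rcases B.step τ with h | h <;> simp [h]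

theorem phiM_eq_zero_of_lt (p : ℝ) (B : Boundary) (n : ℕ) {τ τ₂ : ℤ} (h : τ₂ < τ) :
    phiM p B n τ τ₂ = 0 := by
  cases n with
  | zero => simp [phiM, phiOne, h]
  | succ n => simp [phiM, Finset.Icc_eq_empty_of_lt h]

/-- `phiSeq p B τ₂ n τ = φ^{(n)}(τ, τ₂)`, with `φ^{(0)}` the Kronecker delta. -/
noncomputable def phiSeq (p : ℝ) (B : Boundary) (τ₂ : ℤ) : ℕ → ℤ → ℝ
  | 0 => fun τ => if τ = τ₂ then 1 else 0
  | n + 1 => fun τ => phiM p B n τ τ₂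

theorem phiSeq_succ (p : ℝ) (B : Boundary) (τ₂ : ℤ) (n : ℕ) (τ : ℤ) :
    phiSeq p B τ₂ (n + 1) τ =
      exitWeight p B τ * phiSeq p B τ₂ n τ + phiSeq p B τ₂ (n + 1) (τ + 1) := by
  rcases lt_or_ge τ₂ τ with h | h
  · cases n <;> simp [phiSeq, phiM_eq_zero_of_lt, h, h.trans (lt_add_one τ), h.ne']
  cases n with
  | zero =>
    rcases h.lt_or_eq with h | rfl
    · simp [phiSeq, phiM, phiOne, h.le, h.ne, Int.add_one_le_iff.2 h]
    · simp [phiSeq, phiM, phiOne]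
  | succ n =>
    simp only [phiSeq, phiM]
    rw [Finset.Icc_eq_cons_Ioc h, Finset.sum_cons, ← Finset.Icc_add_one_left_eq_Ioc]
    congr 1
    · simp [phiOne]
    · refine Finset.sum_congr rfl fun z hz => ?_
      rw [Finset.mem_Icc] at hz
      simp [phiOne, hz.1, (lt_add_one τ).le.trans hz.1]

theorem eq_of_forall_succ_eq_mul_add {R : Type*} [Ring R] {F G : ℕ → ℤ → R} (c : ℤ → R) (τ₀ : ℤ)
    (hF : ∀ n τ, F (n + 1) τ = c τ * F n τ + F (n + 1) (τ + 1))
    (hG : ∀ n τ, G (n + 1) τ = c τ * G n τ + G (n + 1) (τ + 1))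
    (h0 : ∀ τ, F 0 τ = G 0 τ) (hτ₀ : ∀ n, F (n + 1) τ₀ = G (n + 1) τ₀) (n : ℕ) (τ : ℤ) :
    F n τ = G n τ := by
  induction n generalizing τ with
  | zero => exact h0 τ
  | succ n ih =>
    induction τ using Int.inductionOn' (b := τ₀) with
    | zero => exact hτ₀ n
    | succ k _ hk => exact add_left_cancel <| (hF n k).symm.trans <| by rw [hk, hG, ih]
    | pred k _ hk => rw [hF, hG, ih, sub_add_cancel, hk]

noncomputable def phiKernel (p : ℝ) (σ k : ℤ) (n : ℕ) (w : ℂ) : ℂ :=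
  ((1 - p) * w + p) ^ σ * w ^ k * (w / (w - 1)) ^ n

theorem phiKernel_succ_of_horizontal (p : ℝ) (σ k : ℤ) (n : ℕ) {w : ℂ} (hw : w ≠ 0)
    (hw₁ : w - 1 ≠ 0) :
    phiKernel p σ k (n + 1) w = phiKernel p σ k n w + phiKernel p σ (k - 1) (n + 1) w := by
  simp only [phiKernel, zpow_sub_one₀ hw, pow_succ]
  field_simp
  ring

theorem phiKernel_succ_of_vertical (p : ℝ) (σ k : ℤ) (n : ℕ) {w : ℂ} (hw : w ≠ 0)
    (hw₁ : w - 1 ≠ 0) (hℓ : (1 - p) * w + p ≠ 0) :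
    phiKernel p σ k (n + 1) w =
      p * phiKernel p σ k n w + phiKernel p (σ + 1) (k - 1) (n + 1) w := by
  simp only [phiKernel, zpow_sub_one₀ hw, zpow_add_one₀ hℓ, pow_succ]
  field_simp
  ring

theorem phiKernel_boundary_succ (p : ℝ) (B : Boundary) (τ₂ : ℤ) (n : ℕ) (τ : ℤ) {w : ℂ}
    (hw : w ≠ 0) (hw₁ : w - 1 ≠ 0) (hℓ : (1 - p) * w + p ≠ 0) :
    phiKernel p ((B.b τ).2 - (B.b (τ₂ + 1)).2) (τ₂ - τ - 1) (n + 1) w =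
      exitWeight p B τ * phiKernel p ((B.b τ).2 - (B.b (τ₂ + 1)).2) (τ₂ - τ - 1) n w +
        phiKernel p ((B.b (τ + 1)).2 - (B.b (τ₂ + 1)).2) (τ₂ - (τ + 1) - 1) (n + 1) w := by
  rw [show τ₂ - (τ + 1) - 1 = τ₂ - τ - 1 - 1 by ring, exitWeight_eq_zpow]
  rcases B.step τ with h | h
  · have e : (B.b (τ + 1)).2 = (B.b τ).2 := by simp [h]
    rw [e, sub_self, zpow_zero, ofReal_one, one_mul]
    exact phiKernel_succ_of_horizontal p _ _ n hw hw₁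
  · have e : (B.b (τ + 1)).2 = (B.b τ).2 + 1 := by simp [h]
    rw [e, add_sub_cancel_left, zpow_one, add_sub_right_comm]
    exact phiKernel_succ_of_vertical p _ _ n hw hw₁ hℓ

theorem notMem_sphere_abs_of_mem_ball {c z : ℂ} {R : ℝ} (hz : z ∈ ball c R) :
    z ∉ sphere c |R| := by
  rw [abs_of_pos (pos_of_mem_ball hz)]
  exact sphere_disjoint_ball.notMem_of_mem_right hz

theorem circleIntegral_affine_pow_mul_sub_zpow_eq_zero {c z₀ : ℂ} {R : ℝ}
    (hz₀ : z₀ ∉ sphere c |R|) (α β : ℂ) (j : ℕ) {m : ℤ} (hm : j + m ≤ -2) :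
    ∮ w in C(c, R), (α * (w - z₀) + β) ^ j * (w - z₀) ^ m = 0 := by
  have hexp : ∀ i ∈ Finset.range (j + 1), (i : ℤ) + m ≤ -2 := fun i hi => by
    rw [Finset.mem_range] at hi; omega
  have hsum : ∀ w : ℂ, (α * (w - z₀) + β) ^ j * (w - z₀) ^ m =
      ∑ i ∈ Finset.range (j + 1), α ^ i * β ^ (j - i) * j.choose i * (w - z₀) ^ ((i : ℤ) + m) :=
    fun w => by
      rw [add_pow, Finset.sum_mul]
      refine Finset.sum_congr rfl fun i hi => ?_
      -- `zpow_add'` needs no `w ≠ z₀` because the exponent `i + m` is nonzero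
      rw [zpow_add' (Or.inr (Or.inl (by linarith [hexp i hi]))), zpow_natCast, mul_pow]
      ring
  simp_rw [hsum]
  rw [circleIntegral.integral_fun_sum
    (f := fun i w => α ^ i * β ^ (j - i) * j.choose i * (w - z₀) ^ ((i : ℤ) + m))
    fun i _ => (circleIntegrable_sub_zpow_iff.2 (Or.inr (Or.inr hz₀))).const_smul]
  refine Finset.sum_eq_zero fun i hi => ?_
  rw [circleIntegral.integral_const_mul,
    circleIntegral.integral_sub_zpow_of_ne (by linarith [hexp i hi]), mul_zero]

section Disc

variable {p r : ℝ}

theorem zero_mem_ball_one_half (hr : 1 / 2 < r) : (0 : ℂ) ∈ ball (1 / 2 : ℂ) r := by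
  simpa [Complex.dist_eq] using hr

theorem one_mem_ball_one_half (hr : 1 / 2 < r) : (1 : ℂ) ∈ ball (1 / 2 : ℂ) r := by
  rw [mem_ball, Complex.dist_eq]; norm_num; exact hr

theorem ne_zero_of_mem_sphere_one_half (hr : 1 / 2 < r) {w : ℂ}
    (hw : w ∈ sphere (1 / 2 : ℂ) r) : w ≠ 0 :=
  sphere_disjoint_ball.ne_of_mem hw (zero_mem_ball_one_half hr)

theorem sub_one_ne_zero_of_mem_sphere_one_half (hr : 1 / 2 < r) {w : ℂ}
    (hw : w ∈ sphere (1 / 2 : ℂ) r) : w - 1 ≠ 0 :=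
  sub_ne_zero.2 (sphere_disjoint_ball.ne_of_mem hw (one_mem_ball_one_half hr))

theorem ne_zero_of_one_half_lt_of_lt (hr₁ : 1 / 2 < r) (hr₂ : r < 1 / 2 + p / (1 - p)) : p ≠ 0 := by
  rintro rfl
  norm_num at hr₂
  linarith

theorem affine_ne_zero_of_mem_closedBall (hp : p < 1) (hr : r < 1 / 2 + p / (1 - p)) {w : ℂ}
    (hw : w ∈ closedBall (1 / 2 : ℂ) r) : (1 - p) * w + p ≠ 0 := by
  intro h
  have hq : (1 - p : ℂ) ≠ 0 := by exact_mod_cast sub_ne_zero.2 hp.ne'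
  have hw' : w = ((-(p / (1 - p)) - 1 / 2 : ℝ) : ℂ) + 1 / 2 := by
    push_cast
    field_simp
    linear_combination 2 * h
  rw [mem_closedBall, Complex.dist_eq, hw', add_sub_cancel_right, Complex.norm_real,
    Real.norm_eq_abs] at hw
  linarith [neg_le_abs (-(p / (1 - p)) - 1 / 2)]

theorem continuousOn_phiKernel (hp : p < 1) (hr₁ : 1 / 2 < r) (hr₂ : r < 1 / 2 + p / (1 - p))
    (σ k : ℤ) (n : ℕ) : ContinuousOn (phiKernel p σ k n) (sphere (1 / 2 : ℂ) r) := fun w hw => by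
  have hw₀ := ne_zero_of_mem_sphere_one_half hr₁ hw
  have hw₁ := sub_one_ne_zero_of_mem_sphere_one_half hr₁ hw
  have hℓ := affine_ne_zero_of_mem_closedBall hp hr₂ (sphere_subset_closedBall hw)
  exact ((((continuousAt_id.const_mul _).add continuousAt_const).zpow₀ σ (Or.inl hℓ)).mul
    (continuousAt_id.zpow₀ k (Or.inl hw₀))).mul
    ((continuousAt_id.div (continuousAt_id.sub continuousAt_const) hw₁).pow n) |>.continuousWithinAt

theorem circleIntegral_phiKernel_zero_of_nonneg (hp : p < 1) (hr₁ : 1 / 2 < r)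
    (hr₂ : r < 1 / 2 + p / (1 - p)) (σ : ℤ) {k : ℤ} (hk : 0 ≤ k) :
    ∮ w in C(1 / 2, r), phiKernel p σ k 0 w = 0 := by
  refine DiffContOnCl.circleIntegral_eq_zero (by linarith)
    (DifferentiableOn.diffContOnCl_ball (U := closedBall (1 / 2) r) (fun w hw => ?_) subset_rfl)
  have hℓ := affine_ne_zero_of_mem_closedBall hp hr₂ hw
  unfold phiKernel
  simp only [pow_zero, mul_one]
  exact ((by fun_prop : DifferentiableAt ℂ (fun w : ℂ => (1 - p) * w + p) w).zpow (Or.inl hℓ)).mul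
    (differentiableAt_id.zpow (Or.inr hk)) |>.differentiableWithinAt

theorem circleIntegral_phiKernel_zero_neg_one (hp : p < 1) (hr₁ : 1 / 2 < r)
    (hr₂ : r < 1 / 2 + p / (1 - p)) (σ : ℤ) :
    ∮ w in C(1 / 2, r), phiKernel p σ (-1) 0 w = 2 * Real.pi * I * p ^ σ := by
  have hd : DifferentiableOn ℂ (fun w : ℂ => ((1 - p) * w + p) ^ σ) (closedBall (1 / 2) r) :=
    fun w hw => ((by fun_prop : DifferentiableAt ℂ (fun w : ℂ => (1 - p) * w + p) w).zpow
      (Or.inl (affine_ne_zero_of_mem_closedBall hp hr₂ hw))).differentiableWithinAt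
  have := hd.circleIntegral_sub_inv_smul (zero_mem_ball_one_half hr₁)
  simp only [sub_zero, smul_eq_mul, mul_zero, zero_add] at this
  rw [← this]
  congr 1
  ext w
  simp [phiKernel, mul_comm]

theorem circleIntegral_phiKernel_zero_of_le (hr₁ : 1 / 2 < r) {σ k : ℤ} (hσ : 0 ≤ σ)
    (hk : k ≤ -σ - 2) : ∮ w in C(1 / 2, r), phiKernel p σ k 0 w = 0 := by
  lift σ to ℕ using hσ
  simpa [phiKernel] using circleIntegral_affine_pow_mul_sub_zpow_eq_zero
    (notMem_sphere_abs_of_mem_ball (zero_mem_ball_one_half hr₁)) (1 - p) p σ (m := k) (by omega)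

theorem circleIntegral_phiKernel_zero_neg_two_succ (hr₁ : 1 / 2 < r) (n : ℕ) :
    ∮ w in C(1 / 2, r), phiKernel p 0 (-2) (n + 1) w = 0 := by
  have hr : 0 ≤ r := by linarith
  have h₀ := notMem_sphere_abs_of_mem_ball (zero_mem_ball_one_half hr₁)
  have h₁ := notMem_sphere_abs_of_mem_ball (one_mem_ball_one_half hr₁)
  rcases n with _ | j
  · rw [circleIntegral.integral_congr hr (g := fun w => (w - 1)⁻¹ - (w - 0)⁻¹)]
    · rw [circleIntegral.integral_sub ((circleIntegrable_sub_inv_iff.2 (Or.inr h₁)))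
        ((circleIntegrable_sub_inv_iff.2 (Or.inr h₀))),
        circleIntegral.integral_sub_inv_of_mem_ball (one_mem_ball_one_half hr₁),
        circleIntegral.integral_sub_inv_of_mem_ball (zero_mem_ball_one_half hr₁), sub_self]
    intro w hw
    have hw₀ := ne_zero_of_mem_sphere_one_half hr₁ hw
    have hw₁ := sub_one_ne_zero_of_mem_sphere_one_half hr₁ hw
    simp only [phiKernel, zpow_zero, one_mul, zpow_neg, zero_add, pow_one, sub_zero]
    field_simp
    ring
  · rw [circleIntegral.integral_congr hr
      (g := fun w => (1 * (w - 1) + 1) ^ j * (w - 1) ^ (-(j + 2 : ℤ)))]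
    · exact circleIntegral_affine_pow_mul_sub_zpow_eq_zero h₁ 1 1 j (by omega)
    intro w hw
    have hw₀ := ne_zero_of_mem_sphere_one_half hr₁ hw
    have hw₁ := sub_one_ne_zero_of_mem_sphere_one_half hr₁ hw
    have : (-(j + 2 : ℤ)) = -((j + 2 : ℕ) : ℤ) := by push_cast; ring
    simp only [phiKernel, zpow_zero, one_mul, this, zpow_neg, zpow_natCast, one_mul, sub_add_cancel]
    field_simp
    rw [show j + 1 + 1 = j + 2 from rfl, ← mul_pow, div_mul_cancel₀ _ hw₁]
    ring

theorem circleIntegral_phiKernel_boundary_succ (hp : p < 1) (hr₁ : 1 / 2 < r)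
    (hr₂ : r < 1 / 2 + p / (1 - p)) (B : Boundary) (τ₂ : ℤ) (n : ℕ) (τ : ℤ) :
    ∮ w in C(1 / 2, r), phiKernel p ((B.b τ).2 - (B.b (τ₂ + 1)).2) (τ₂ - τ - 1) (n + 1) w =
      exitWeight p B τ *
          (∮ w in C(1 / 2, r), phiKernel p ((B.b τ).2 - (B.b (τ₂ + 1)).2) (τ₂ - τ - 1) n w) +
        ∮ w in C(1 / 2, r),
          phiKernel p ((B.b (τ + 1)).2 - (B.b (τ₂ + 1)).2) (τ₂ - (τ + 1) - 1) (n + 1) w := by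
  have hr : 0 ≤ r := by linarith
  rw [circleIntegral.integral_congr hr fun w hw => phiKernel_boundary_succ p B τ₂ n τ
      (ne_zero_of_mem_sphere_one_half hr₁ hw) (sub_one_ne_zero_of_mem_sphere_one_half hr₁ hw)
      (affine_ne_zero_of_mem_closedBall hp hr₂ (sphere_subset_closedBall hw)),
    circleIntegral.integral_add, circleIntegral.integral_const_mul]
  · exact (continuousOn_const.mul (continuousOn_phiKernel hp hr₁ hr₂ _ _ _)).circleIntegrable hr
  · exact (continuousOn_phiKernel hp hr₁ hr₂ _ _ _).circleIntegrable hr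

theorem exitWeight_mul_circleIntegral_phiKernel_boundary_zero (hp : p < 1) (hr₁ : 1 / 2 < r)
    (hr₂ : r < 1 / 2 + p / (1 - p)) (B : Boundary) (τ₂ τ : ℤ) :
    exitWeight p B τ₂ *
        ∮ w in C(1 / 2, r), phiKernel p ((B.b τ).2 - (B.b (τ₂ + 1)).2) (τ₂ - τ - 1) 0 w =
      2 * Real.pi * I * if τ = τ₂ then 1 else 0 := by
  rcases lt_trichotomy τ τ₂ with h | rfl | h
  · rw [circleIntegral_phiKernel_zero_of_nonneg hp hr₁ hr₂ _ (by omega), if_neg h.ne]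
    simp
  · have hp₀ : (p : ℂ) ≠ 0 := ofReal_ne_zero.2 (ne_zero_of_one_half_lt_of_lt hr₁ hr₂)
    rw [sub_self, zero_sub, circleIntegral_phiKernel_zero_neg_one hp hr₁ hr₂, exitWeight_eq_zpow,
      if_pos rfl, ← neg_sub, zpow_neg]
    push_cast
    field_simp
  · have hτ : τ₂ + 1 ≤ τ := h
    have hσ : 0 ≤ (B.b τ).2 - (B.b (τ₂ + 1)).2 := sub_nonneg.2 (B.monotone_snd hτ)
    have hk := B.monotone_sub_snd hτ
    dsimp only at hk
    rw [circleIntegral_phiKernel_zero_of_le hr₁ hσ (by omega), if_neg h.ne']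
    simp

theorem exitWeight_mul_circleIntegral_phiKernel_boundary_eq_phiSeq (hp : p < 1) (hr₁ : 1 / 2 < r)
    (hr₂ : r < 1 / 2 + p / (1 - p)) (B : Boundary) (τ₂ : ℤ) (n : ℕ) (τ : ℤ) :
    exitWeight p B τ₂ * ((2 * Real.pi * I)⁻¹ *
        ∮ w in C(1 / 2, r), phiKernel p ((B.b τ).2 - (B.b (τ₂ + 1)).2) (τ₂ - τ - 1) n w) =
      phiSeq p B τ₂ n τ := by
  refine eq_of_forall_succ_eq_mul_add (fun τ => (exitWeight p B τ : ℂ)) (τ₂ + 1)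
    (F := fun n τ => exitWeight p B τ₂ * ((2 * Real.pi * I)⁻¹ *
        ∮ w in C(1 / 2, r), phiKernel p ((B.b τ).2 - (B.b (τ₂ + 1)).2) (τ₂ - τ - 1) n w))
    (G := fun n τ => (phiSeq p B τ₂ n τ : ℂ)) (fun n τ => ?_) (fun n τ => ?_) (fun τ => ?_)
    (fun n => ?_) n τ
  · rw [circleIntegral_phiKernel_boundary_succ hp hr₁ hr₂]
    ring
  · exact_mod_cast phiSeq_succ p B τ₂ n τ
  · rw [mul_left_comm, exitWeight_mul_circleIntegral_phiKernel_boundary_zero hp hr₁ hr₂,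
      ← mul_assoc, inv_mul_cancel₀ (by simp [Real.pi_ne_zero, I_ne_zero]), one_mul]
    split_ifs <;> simp [phiSeq, *]
  · rw [sub_self, show τ₂ - (τ₂ + 1) - 1 = -2 by ring,
      circleIntegral_phiKernel_zero_neg_two_succ hr₁]
    simp [phiSeq, phiM_eq_zero_of_lt]

theorem integrand_eq_exitWeight_mul_phiKernel (hp : p < 1) (hr₁ : 1 / 2 < r)
    (hr₂ : r < 1 / 2 + p / (1 - p)) (B : Boundary) (τ₁ τ₂ : ℤ) (n : ℕ) {w : ℂ}
    (hw : w ∈ sphere (1 / 2 : ℂ) r) :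
    ((1 - p : ℂ) + p / w) ^ ((B.b τ₁).2 - (B.b τ₂).2) * w ^ ((B.b τ₁).1 - (B.b τ₂).1 + n) /
        (w ^ 2 * (w - 1) ^ n * (1 / w + 1 / (exitWeight p B τ₂ : ℂ) - 1)) =
      exitWeight p B τ₂ * phiKernel p ((B.b τ₁).2 - (B.b (τ₂ + 1)).2) (τ₂ - τ₁ - 1) n w := by
  have hw₀ := ne_zero_of_mem_sphere_one_half hr₁ hw
  have hw₁ := sub_one_ne_zero_of_mem_sphere_one_half hr₁ hw
  have hℓ := affine_ne_zero_of_mem_closedBall hp hr₂ (sphere_subset_closedBall hw)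
  have hbase : (1 - p : ℂ) + p / w = ((1 - p) * w + p) / w := by field_simp
  rw [B.fst_sub_fst τ₁ τ₂, hbase, div_zpow, zpow_add₀ hw₀, zpow_add₀ hw₀, zpow_natCast,
    exitWeight_eq_zpow, phiKernel, zpow_sub_one₀ hw₀, div_pow]
  rcases B.step τ₂ with h | h
  · have e : (B.b (τ₂ + 1)).2 = (B.b τ₂).2 := by simp [h]
    rw [e, sub_self, zpow_zero, ofReal_one]
    field_simp
    ring
  · have hp₀ : (p : ℂ) ≠ 0 := ofReal_ne_zero.2 (ne_zero_of_one_half_lt_of_lt hr₁ hr₂)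
    have e : (B.b (τ₂ + 1)).2 = (B.b τ₂).2 + 1 := by simp [h]
    rw [e, add_sub_cancel_left, zpow_one, ← sub_sub, zpow_sub_one₀ hℓ,
      show 1 / w + 1 / (p : ℂ) - 1 = ((1 - p) * w + p) / (p * w) by field_simp; ring]
    field_simp

end Disc

theorem phiM_integral_representation_general (p : ℝ) (hp1 : p < 1)
    (B : Boundary) (m : ℕ) (τ₁ τ₂ : ℤ)
    (r : ℝ) (hr1 : 1/2 < r) (hr2 : r < 1/2 + p / (1 - p)) :
    (phiM p B m τ₁ τ₂ : ℂ) =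
      (2 * Real.pi * Complex.I)⁻¹ *
        ∮ w in C(1/2, r),
          ((1 - p : ℂ) + p / w) ^ ((B.b τ₁).2 - (B.b τ₂).2) *
              w ^ ((B.b τ₁).1 - (B.b τ₂).1 + (m + 1 : ℤ)) /
            (w ^ 2 * (w - 1) ^ (m + 1) * (1 / w + 1 / (exitWeight p B τ₂ : ℂ) - 1)) := by
  rw [circleIntegral.integral_congr (by linarith) fun w hw => by
      exact_mod_cast integrand_eq_exitWeight_mul_phiKernel hp1 hr1 hr2 B τ₁ τ₂ (m + 1) hw,
    circleIntegral.integral_const_mul, mul_left_comm,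
    exitWeight_mul_circleIntegral_phiKernel_boundary_eq_phiSeq hp1 hr1 hr2]
  rfl

/-- integral representation of the `m`-fold convolution `φ^{(m)}`, `m ≥ 1`
(here `φ^{(m)} = phiM p B (m-1)`, i.e. the claim is stated for `phiM p B m = φ^{(m+1)}`). -/
theorem phiM_integral_representation (p : ℝ) (hp0 : 0 < p) (hp1 : p < 1)
    (B : Boundary) (m : ℕ) (τ₁ τ₂ : ℤ)
    (r : ℝ) (hr1 : 1/2 < r) (hr2 : r < 1/2 + p / (1 - p)) :
    (phiM p B m τ₁ τ₂ : ℂ) =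
      (2 * Real.pi * Complex.I)⁻¹ *
        ∮ w in C(1/2, r),
          ((1 - p : ℂ) + p / w) ^ ((B.b τ₁).2 - (B.b τ₂).2) *
              w ^ ((B.b τ₁).1 - (B.b τ₂).1 + (m + 1 : ℤ)) /
            (w ^ 2 * (w - 1) ^ (m + 1) * (1 / w + 1 / (exitWeight p B τ₂ : ℂ) - 1)) :=
  phiM_integral_representation_general p hp1 B m τ₁ τ₂ r hr1 hr2
end

section
/- Let 0 < p < 1, q = 1 − p, let b be a boundary with coordinates b(τ) = (x(τ), t(τ)) and exit weights π, let c₀ = (x₀, t₀) ∈ ℤ × ℤ, let n ≤ −1 be an integer, and let i₁ ∈ ℤ be such that t(τ) ≥ t₀ for all τ ≥ i₁. Then the series ∑_{m=0}^{∞} π(i₁ + m) · F̂_n( b(i₁ + m) − c₀ ) converges (HasSum), and its sum equals −F̂_{n+1}( b(i₁) − c₀ + (1, 0) ). -/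
open Complex

/-- The function `F̂_n(x,t)` as a contour integral over the circle `|w − 1/2| = R`
with `1/2 < R < 1/2 + p/q`, enclosing `0` and `1` but not `−p/q`. -/
noncomputable def Fhat (p R : ℝ) (n : ℤ) (z : ℤ × ℤ) : ℂ :=
  (2 * Real.pi * Complex.I)⁻¹ *
    ∮ w in C(1/2, R), ((1 - p : ℂ) + p / w) ^ z.2 * (1 - w) ^ (-n) * w ^ (z.1 - 1)

/-!
For `t ≥ 0` and `n ≤ 0` the integrand of `F̂_n(x, t)` is a Laurent polynomial in `w`, so the
contour integral is `2πi` times its coefficient of `w⁻¹` and can be taken over any circle around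
`0`. On `|w| = 2` one has `|q + p/w| ≤ 1 - p/2`, whence `‖F̂_n(x, t)‖ ≤ (1 - p/2)^t 3^(-n) 2^x`.
Along the boundary `x` never increases while `t - x` grows by one at each step, so these values
decay geometrically. Identities between the integrands show that `π(τ) F̂_n(b(τ) - c₀)` is the
increment `Φ(τ + 1) - Φ(τ)` of `Φ(τ) = F̂_{n+1}(b(τ) - c₀ + (1, 0))`, and the series telescopes
to `-Φ(i₁)`.
-/

open Metric
open scoped LaurentPolynomial

lemma LaurentPolynomial.eval₂_id_eq_sum {K : Type*} [Field K] (f : K[T;T⁻¹]) (u : Kˣ) :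
    LaurentPolynomial.eval₂ (RingHom.id K) u f = f.coeff.sum fun n a => a * (u : K) ^ n := by
  induction f using LaurentPolynomial.induction_on' with
  | add f g hf hg =>
    rw [map_add, hf, hg, AddMonoidAlgebra.coeff_add,
      Finsupp.sum_add_index' (by simp) (by simp [add_mul])]
  | C_mul_T n a =>
    rw [← LaurentPolynomial.single_eq_C_mul_T, AddMonoidAlgebra.coeff_single,
      Finsupp.sum_single_index (by simp)]
    simp

section CircleIntegral

variable {c : ℂ} {R : ℝ}

lemma circleIntegral_zpow_of_mem_ball (h : (0 : ℂ) ∈ ball c R) (e : ℤ) :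
    (∮ w in C(c, R), w ^ e) = if e = -1 then 2 * Real.pi * Complex.I else 0 := by
  split_ifs with he
  · subst he
    simpa [zpow_neg_one] using circleIntegral.integral_sub_inv_of_mem_ball h
  · simpa using circleIntegral.integral_sub_zpow_of_ne he c 0 R

lemma circleIntegrable_zpow_of_mem_ball (h : (0 : ℂ) ∈ ball c R) (e : ℤ) :
    CircleIntegrable (fun w : ℂ => w ^ e) c R :=
  (continuousOn_id.zpow₀ e fun _ hw =>
    Or.inl (sphere_disjoint_ball.ne_of_mem hw h)).circleIntegrable
    (dist_nonneg.trans (mem_ball.1 h).le)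

theorem circleIntegral_eq_two_pi_I_mul_coeff {f : ℂ[T;T⁻¹]} {g : ℂ → ℂ}
    (hg : ∀ u : ℂˣ, g u = LaurentPolynomial.eval₂ (RingHom.id ℂ) u f) (h : (0 : ℂ) ∈ ball c R) :
    (∮ w in C(c, R), g w) = 2 * Real.pi * Complex.I * f.coeff (-1) := by
  have hR : 0 ≤ R := dist_nonneg.trans (mem_ball.1 h).le
  calc (∮ w in C(c, R), g w)
      = ∮ w in C(c, R), ∑ n ∈ f.coeff.support, f.coeff n * w ^ n := by
        refine circleIntegral.integral_congr hR fun w hw => ?_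
        simpa [LaurentPolynomial.eval₂_id_eq_sum, Finsupp.sum] using
          hg (Units.mk0 w (sphere_disjoint_ball.ne_of_mem hw h))
    _ = ∑ n ∈ f.coeff.support, f.coeff n * ∮ w in C(c, R), w ^ n := by
        rw [circleIntegral.integral_fun_sum (f := fun n w => f.coeff n * w ^ n) fun n _ =>
          (circleIntegrable_zpow_of_mem_ball h n).const_fun_smul]
        simp only [circleIntegral.integral_const_mul]
    _ = 2 * Real.pi * Complex.I * f.coeff (-1) := by
        simp [circleIntegral_zpow_of_mem_ball h, mul_comm]

end CircleIntegral

section Fhat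

variable {p R : ℝ}

noncomputable def fhatIntegrand (p : ℝ) (n : ℤ) (z : ℤ × ℤ) (w : ℂ) : ℂ :=
  ((1 - p : ℂ) + p / w) ^ z.2 * (1 - w) ^ (-n) * w ^ (z.1 - 1)

lemma Fhat_def (p R : ℝ) (n : ℤ) (z : ℤ × ℤ) :
    Fhat p R n z = (2 * Real.pi * Complex.I)⁻¹ * ∮ w in C(1 / 2, R), fhatIntegrand p n z w :=
  rfl

lemma zero_mem_ball_half (hR : 1 / 2 < R) : (0 : ℂ) ∈ ball (1 / 2) R := by
  simpa [mem_ball, dist_eq, norm_div] using hR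

lemma one_mem_ball_half (hR : 1 / 2 < R) : (1 : ℂ) ∈ ball (1 / 2) R := by
  norm_num [mem_ball, dist_eq, hR]

lemma ne_zero_and_one_sub_ne_zero_of_mem_sphere (hR : 1 / 2 < R) {w : ℂ}
    (hw : w ∈ sphere (1 / 2) R) : w ≠ 0 ∧ 1 - w ≠ 0 :=
  ⟨sphere_disjoint_ball.ne_of_mem hw (zero_mem_ball_half hR),
    sub_ne_zero.2 (sphere_disjoint_ball.ne_of_mem hw (one_mem_ball_half hR)).symm⟩

lemma exists_laurentPolynomial_fhatIntegrand {n : ℤ} (hn : n ≤ 0) {z : ℤ × ℤ} (hz : 0 ≤ z.2) :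
    ∃ f : ℂ[T;T⁻¹], ∀ u : ℂˣ,
      fhatIntegrand p n z u = LaurentPolynomial.eval₂ (RingHom.id ℂ) u f := by
  obtain ⟨m, rfl⟩ : ∃ m : ℕ, n = -m := ⟨n.natAbs, by omega⟩
  obtain ⟨x, t⟩ := z
  lift t to ℕ using hz
  open LaurentPolynomial in
  refine ⟨(C (1 - p : ℂ) + C (p : ℂ) * T (-1)) ^ t * (1 - T 1) ^ m * T (x - 1), fun u => ?_⟩
  simp [fhatIntegrand, div_eq_mul_inv]

lemma Fhat_eq_circleIntegral (hR : 1 / 2 < R) {n : ℤ} (hn : n ≤ 0) {z : ℤ × ℤ} (hz : 0 ≤ z.2)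
    {c : ℂ} {R' : ℝ} (h : (0 : ℂ) ∈ ball c R') :
    Fhat p R n z = (2 * Real.pi * Complex.I)⁻¹ * ∮ w in C(c, R'), fhatIntegrand p n z w := by
  obtain ⟨f, hf⟩ := exists_laurentPolynomial_fhatIntegrand (p := p) hn hz
  rw [Fhat_def, circleIntegral_eq_two_pi_I_mul_coeff hf h,
    circleIntegral_eq_two_pi_I_mul_coeff hf (zero_mem_ball_half hR)]

lemma norm_Fhat_le (hR : 1 / 2 < R) {n : ℤ} (hn : n ≤ 0) {z : ℤ × ℤ} (hz : 0 ≤ z.2) :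
    ‖Fhat p R n z‖ ≤ (|1 - p| + |p| / 2) ^ z.2 * 3 ^ (-n) * 2 ^ z.1 := by
  rw [Fhat_eq_circleIntegral hR hn hz (c := 0) (R' := 2) (by simp), ← smul_eq_mul]
  refine (circleIntegral.norm_two_pi_i_inv_smul_integral_le_of_norm_le_const
    (C := (|1 - p| + |p| / 2) ^ z.2 * 3 ^ (-n) * 2 ^ (z.1 - 1)) zero_le_two
    fun w hw => ?_).trans_eq ?_
  · have hw : ‖w‖ = 2 := by simpa using hw
    have hfirst : ‖(1 - p : ℂ) + p / w‖ ≤ |1 - p| + |p| / 2 := by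
      refine (norm_add_le _ _).trans_eq ?_
      rw [norm_div, hw, ← ofReal_one, ← ofReal_sub, norm_real, norm_real, Real.norm_eq_abs,
        Real.norm_eq_abs]
    have hsecond : ‖1 - w‖ ≤ 3 := by
      refine (norm_sub_le _ _).trans ?_
      rw [norm_one, hw]; norm_num
    simp only [fhatIntegrand, norm_mul, norm_zpow, hw]
    gcongr
    · exact zpow_le_zpow_left₀ hz (norm_nonneg _) hfirst
    · exact zpow_le_zpow_left₀ (by omega) (norm_nonneg _) hsecond
  · rw [zpow_sub_one₀ two_ne_zero]
    ring

lemma circleIntegrable_fhatIntegrand (hR : 1 / 2 < R) (n : ℤ) {z : ℤ × ℤ} (hz : 0 ≤ z.2) :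
    CircleIntegrable (fhatIntegrand p n z) (1 / 2) R := by
  refine ContinuousOn.circleIntegrable (by linarith) fun w hw => ?_
  obtain ⟨hw0, hw1⟩ := ne_zero_and_one_sub_ne_zero_of_mem_sphere hR hw
  unfold fhatIntegrand
  fun_prop (disch := first | assumption | (left; assumption) | (right; assumption))

lemma Fhat_sub_Fhat (hR : 1 / 2 < R) {n n' : ℤ} {z z' : ℤ × ℤ} (hz : 0 ≤ z.2) (hz' : 0 ≤ z'.2) :
    Fhat p R n z - Fhat p R n' z' = (2 * Real.pi * Complex.I)⁻¹ *
      ∮ w in C(1 / 2, R), (fhatIntegrand p n z w - fhatIntegrand p n' z' w) := by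
  rw [circleIntegral.integral_sub (circleIntegrable_fhatIntegrand hR n hz)
    (circleIntegrable_fhatIntegrand hR n' hz'), mul_sub, Fhat_def, Fhat_def]

lemma Fhat_sub_Fhat_fst_add_one (hR : 1 / 2 < R) (n x : ℤ) {t : ℤ} (ht : 0 ≤ t) :
    Fhat p R (n + 1) (x, t) - Fhat p R (n + 1) (x + 1, t) = Fhat p R n (x, t) := by
  rw [Fhat_sub_Fhat hR ht ht, Fhat_def]
  congr 1
  refine circleIntegral.integral_congr (by linarith) fun w hw => ?_
  obtain ⟨hw0, hw1⟩ := ne_zero_and_one_sub_ne_zero_of_mem_sphere hR hw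
  simp only [fhatIntegrand]
  rw [show -n = -(n + 1) + 1 by ring, zpow_add_one₀ hw1,
    show x + 1 - 1 = x - 1 + 1 by ring, zpow_add_one₀ hw0]
  ring

lemma Fhat_snd_add_one_sub_Fhat (hR : 1 / 2 < R) (n x : ℤ) {t : ℤ} (ht : 0 ≤ t) :
    Fhat p R (n + 1) (x + 1, t + 1) - Fhat p R (n + 1) (x + 1, t) = p * Fhat p R n (x, t) := by
  rw [Fhat_sub_Fhat hR (by omega) ht, Fhat_def, mul_left_comm,
    ← circleIntegral.integral_const_mul (p : ℂ)]
  congr 1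
  refine circleIntegral.integral_congr (by linarith) fun w hw => ?_
  obtain ⟨hw0, hw1⟩ := ne_zero_and_one_sub_ne_zero_of_mem_sphere hR hw
  lift t to ℕ using ht
  simp only [fhatIntegrand]
  rw [show -n = -(n + 1) + 1 by ring, zpow_add_one₀ hw1,
    show x + 1 - 1 = x - 1 + 1 by ring, zpow_add_one₀ hw0, ← Nat.cast_succ, zpow_natCast,
    zpow_natCast, pow_succ]
  field_simp
  ring

end Fhat

namespace Boundary

variable (B : Boundary)

lemma fst_succ_le (τ : ℤ) : (B.b (τ + 1)).1 ≤ (B.b τ).1 := by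
  rcases B.step τ with h | h <;> simp [h]

lemma antitone_fst : Antitone fun τ => (B.b τ).1 :=
  antitone_int_of_succ_le B.fst_succ_le

lemma snd_sub_fst_succ (τ : ℤ) :
    (B.b (τ + 1)).2 - (B.b (τ + 1)).1 = (B.b τ).2 - (B.b τ).1 + 1 := by
  rcases B.step τ with h | h <;> simp [h] <;> ring

lemma snd_sub_fst_add (τ : ℤ) (M : ℕ) :
    (B.b (τ + M)).2 - (B.b (τ + M)).1 = (B.b τ).2 - (B.b τ).1 + M := by
  induction M with
  | zero => simp
  | succ M ih => rw [Nat.cast_succ, ← add_assoc, snd_sub_fst_succ, ih, add_assoc]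

variable {p R : ℝ}

lemma exitWeight_mul_Fhat (hR : 1 / 2 < R) (n : ℤ) {τ : ℤ} {c : ℤ × ℤ} (hτ : c.2 ≤ (B.b τ).2) :
    exitWeight p B τ * Fhat p R n (B.b τ - c) =
      Fhat p R (n + 1) (B.b (τ + 1) - c + (1, 0)) - Fhat p R (n + 1) (B.b τ - c + (1, 0)) := by
  have hz : 0 ≤ (B.b τ - c).2 := by simpa using hτ
  have hshift : B.b τ - c + (1, 0) = ((B.b τ - c).1 + 1, (B.b τ - c).2) := by ext <;> simp
  rcases B.step τ with h | h
  · have hne : B.b (τ + 1) ≠ B.b τ + (0, 1) := by simp [h, Prod.ext_iff]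
    have hnext : B.b (τ + 1) - c + (1, 0) = ((B.b τ - c).1, (B.b τ - c).2) := by
      ext <;> simp only [h, Prod.fst_add, Prod.snd_add, Prod.fst_sub, Prod.snd_sub] <;> ring
    rw [exitWeight, if_neg hne, hnext, hshift, Fhat_sub_Fhat_fst_add_one hR n _ hz, ofReal_one,
      one_mul]
  · have hnext : B.b (τ + 1) - c + (1, 0) = ((B.b τ - c).1 + 1, (B.b τ - c).2 + 1) := by
      ext <;> simp only [h, Prod.fst_add, Prod.snd_add, Prod.fst_sub, Prod.snd_sub] <;> ring
    rw [exitWeight, if_pos h, hnext, hshift, Fhat_snd_add_one_sub_Fhat hR n _ hz]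

lemma summable_Fhat (hp0 : 0 < p) (hp1 : p < 1) (hR : 1 / 2 < R) {n : ℤ} (hn : n ≤ 0)
    {c : ℤ × ℤ} {i : ℤ} (ht : ∀ τ, i ≤ τ → c.2 ≤ (B.b τ).2) :
    Summable fun M : ℕ => Fhat p R n (B.b (i + M) - c) := by
  set r : ℝ := 1 - p / 2 with hr
  have hr0 : 0 < r := by linarith
  have hr1 : r < 1 := by linarith
  have h2r : 1 ≤ 2 * r := by linarith
  have hnorm : |1 - p| + |p| / 2 = r := by
    rw [abs_of_pos (by linarith), abs_of_pos hp0]; ring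
  set X := (B.b i).1 - c.1
  set d := (B.b i).2 - c.2 - X
  refine Summable.of_norm_bounded ((summable_geometric_of_lt_one hr0.le hr1).mul_left
    (3 ^ (-n) * (2 * r) ^ X * r ^ d)) fun M => ?_
  have hx : (B.b (i + M) - c).1 ≤ X := by
    simpa [X] using B.antitone_fst (le_add_of_nonneg_right (Nat.cast_nonneg M))
  have htx : (B.b (i + M) - c).2 = (B.b (i + M) - c).1 + (d + M) := by
    have := B.snd_sub_fst_add i M
    simp only [Prod.fst_sub, Prod.snd_sub, d, X]
    omega
  calc ‖Fhat p R n (B.b (i + M) - c)‖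
      ≤ r ^ (B.b (i + M) - c).2 * 3 ^ (-n) * 2 ^ (B.b (i + M) - c).1 := by
        simpa only [hnorm] using norm_Fhat_le (p := p) (z := B.b (i + M) - c) hR hn
          (by simpa using ht (i + M) (by omega))
    _ = 3 ^ (-n) * (2 * r) ^ (B.b (i + M) - c).1 * r ^ d * r ^ M := by
        rw [htx, zpow_add₀ hr0.ne', zpow_add₀ hr0.ne', zpow_natCast, mul_zpow]
        ring
    _ ≤ 3 ^ (-n) * (2 * r) ^ X * r ^ d * r ^ M := by
        gcongr

end Boundary

theorem Summable.hasSum_succ_sub {G : Type*} [AddCommGroup G] [TopologicalSpace G]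
    [IsTopologicalAddGroup G] {g : ℕ → G} (hg : Summable g) :
    HasSum (fun M => g (M + 1) - g M) (-g 0) := by
  simpa using ((hasSum_nat_add_iff' 1).2 hg.hasSum).sub hg.hasSum

theorem telescoping_series_boundary_general (p : ℝ) (hp0 : 0 < p) (hp1 : p < 1)
    (B : Boundary) (c₀ : ℤ × ℤ) (n : ℤ) (hn : n ≤ -1) (i₁ : ℤ)
    (ht : ∀ τ : ℤ, i₁ ≤ τ → c₀.2 ≤ (B.b τ).2)
    (R : ℝ) (hR1 : 1/2 < R) :
    HasSum (fun m : ℕ => (exitWeight p B (i₁ + m) : ℂ) * Fhat p R n (B.b (i₁ + m) - c₀))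
      (-Fhat p R (n + 1) (B.b i₁ - c₀ + (1, 0))) := by
  have hsummable : Summable fun M : ℕ => Fhat p R (n + 1) (B.b (i₁ + M) - c₀ + (1, 0)) := by
    simp only [sub_add]
    exact B.summable_Fhat hp0 hp1 hR1 (by omega) fun τ hτ => by simpa using ht τ hτ
  refine (add_zero i₁ ▸ hsummable.hasSum_succ_sub).congr_fun fun M => ?_
  rw [Nat.cast_succ, ← add_assoc, B.exitWeight_mul_Fhat hR1 n (ht _ (by omega))]

/-- for `n ≤ −1` the series `∑_{m=0}^{∞} π(i₁+m)·F̂_n(b(i₁+m) − c₀)`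
converges with sum `−F̂_{n+1}(b(i₁) − c₀ + (1,0))`. -/
theorem telescoping_series_boundary (p : ℝ) (hp0 : 0 < p) (hp1 : p < 1)
    (B : Boundary) (c₀ : ℤ × ℤ) (n : ℤ) (hn : n ≤ -1) (i₁ : ℤ)
    (ht : ∀ τ : ℤ, i₁ ≤ τ → c₀.2 ≤ (B.b τ).2)
    (R : ℝ) (hR1 : 1/2 < R) (hR2 : R < 1/2 + p / (1 - p)) :
    HasSum (fun m : ℕ => (exitWeight p B (i₁ + m) : ℂ) * Fhat p R n (B.b (i₁ + m) - c₀))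
      (-Fhat p R (n + 1) (B.b i₁ - c₀ + (1, 0))) :=
  telescoping_series_boundary_general p hp0 hp1 B c₀ n hn i₁ ht R hR1
end
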